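/- arXiv:1905.02031 — 3 statements merged into one kernel-verified Lean document; each statement's English description precedes it below -/
import Mathlib

section
/- Suppose P_Y is a probability density on ℝ such that for every σ ∈ [0,1), ln b · Σ_{m∈ℤ} P_Y((m+σ) ln b) = 1 (the trapezoidal sum with step h = ln b and offset σ ln b equals the integral ∫_ℝ P_Y = 1). Then the random variable X = e^Y, where Y has density P_Y, satisfies the strong Benford law in base b. -/
open MeasureTheory

/-- If `P_Y` is a continuous probability density on `ℝ` whose offset trapezoidal sums with
step `ln b` all equal `1`, then `X = e^Y` satisfies the strong Benford law in base `b`. -/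
theorem trapezoidal_exact_implies_benford
    (b : ℕ) (hb : 2 ≤ b)
    {Ω : Type*} [MeasurableSpace Ω] (μ : Measure Ω) [IsProbabilityMeasure μ]
    (Y : Ω → ℝ) (hYm : Measurable Y)
    (P_Y : ℝ → ℝ) (hPYc : Continuous P_Y) (hPYnn : ∀ y, 0 ≤ P_Y y)
    (hPYint : ∫ y : ℝ, P_Y y = 1)
    (hd : μ.map Y = volume.withDensity (fun y => ENNReal.ofReal (P_Y y)))
    (htrap : ∀ σ ∈ Set.Ico (0 : ℝ) 1,
      Real.log b * ∑' m : ℤ, P_Y (((m : ℝ) + σ) * Real.log b) = 1) :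
    ∀ s ∈ Set.Ico (1 : ℝ) b,
      μ {ω | 1 ≤ (b : ℝ) ^ Int.fract (Real.logb b (Real.exp (Y ω))) ∧
             (b : ℝ) ^ Int.fract (Real.logb b (Real.exp (Y ω))) ≤ s}
        = ENNReal.ofReal (Real.logb b s) := by
  intro s hs
  have hb1 : (1 : ℝ) < b := by
    have : (2 : ℝ) ≤ b := by exact_mod_cast hb
    linarith
  have hb0 : (0 : ℝ) < b := by linarith
  set L : ℝ := Real.log b with hLdef
  have hL : 0 < L := Real.log_pos hb1
  set c : ℝ := Real.logb b s with hcdef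
  have hs1 : (1 : ℝ) ≤ s := hs.1
  have hs0 : (0 : ℝ) < s := by linarith
  have hc0 : 0 ≤ c := Real.logb_nonneg hb1 hs1
  have hc1 : c < 1 := by
    have h1 : Real.logb b s < Real.logb b b := Real.logb_lt_logb hb1 hs0 hs.2
    rwa [Real.logb_self_eq_one hb1] at h1
  -- rewrite the event
  have hset : {ω | 1 ≤ (b : ℝ) ^ Int.fract (Real.logb b (Real.exp (Y ω))) ∧
             (b : ℝ) ^ Int.fract (Real.logb b (Real.exp (Y ω))) ≤ s}
      = Y ⁻¹' {y | Int.fract (y / L) ≤ c} := by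
    ext ω
    simp only [Set.mem_setOf_eq, Set.mem_preimage]
    have h1 : Real.logb b (Real.exp (Y ω)) = Y ω / L := by
      rw [Real.logb, Real.log_exp]
    rw [h1]
    have hb' : (b : ℝ) ^ c = s := Real.rpow_logb hb0 hb1.ne' hs0
    constructor
    · rintro ⟨-, h2⟩
      rw [← hb'] at h2
      exact (Real.rpow_le_rpow_left_iff hb1).mp h2
    · intro h
      refine ⟨Real.one_le_rpow hb1.le (Int.fract_nonneg _), ?_⟩
      rw [← hb']
      exact (Real.rpow_le_rpow_left_iff hb1).mpr h
  -- the preimage set as a disjoint union of intervals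
  have hAeq : {y : ℝ | Int.fract (y / L) ≤ c}
      = ⋃ m : ℤ, Set.Icc ((m : ℝ) * L) ((m : ℝ) * L + c * L) := by
    ext y
    simp only [Set.mem_setOf_eq, Set.mem_iUnion, Set.mem_Icc]
    constructor
    · intro h
      refine ⟨⌊y / L⌋, ?_, ?_⟩
      · have := Int.floor_le (y / L)
        calc (⌊y / L⌋ : ℝ) * L ≤ (y / L) * L := by
              exact mul_le_mul_of_nonneg_right this hL.le
          _ = y := by field_simp
      · have : y / L - ⌊y / L⌋ ≤ c := h
        have h2 : y / L ≤ ⌊y / L⌋ + c := by linarith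
        calc y = (y / L) * L := by field_simp
          _ ≤ ((⌊y / L⌋ : ℝ) + c) * L := mul_le_mul_of_nonneg_right h2 hL.le
          _ = (⌊y / L⌋ : ℝ) * L + c * L := by ring
    · rintro ⟨m, h1, h2⟩
      have hm1 : (m : ℝ) ≤ y / L := by
        rw [le_div_iff₀ hL]; linarith
      have hm2 : y / L ≤ (m : ℝ) + c := by
        rw [div_le_iff₀ hL]; linarith [mul_comm c L]
      have hfl : ⌊y / L⌋ = m := by
        apply Int.floor_eq_iff.mpr
        exact ⟨hm1, by push_cast; linarith⟩
      rw [Int.fract, hfl]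
      linarith
  have hA : MeasurableSet {y : ℝ | Int.fract (y / L) ≤ c} := by
    rw [hAeq]; exact MeasurableSet.iUnion fun m => measurableSet_Icc
  rw [hset, ← Measure.map_apply hYm hA, hd, withDensity_apply _ hA, hAeq]
  have hdisj : Pairwise (Function.onFun Disjoint
      fun m : ℤ => Set.Icc ((m : ℝ) * L) ((m : ℝ) * L + c * L)) := by
    have key : ∀ m n : ℤ, m < n → Disjoint (Set.Icc ((m : ℝ) * L) ((m : ℝ) * L + c * L))
        (Set.Icc ((n : ℝ) * L) ((n : ℝ) * L + c * L)) := by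
      intro m n hmn
      rw [Set.disjoint_left]
      rintro x ⟨-, hx2⟩ ⟨hx3, -⟩
      have hmn' : (m : ℝ) + 1 ≤ n := by exact_mod_cast hmn
      nlinarith
    intro m n hmn
    rcases lt_or_gt_of_ne hmn with h | h
    · exact key m n h
    · exact (key n m h).symm
  rw [lintegral_iUnion (fun m => measurableSet_Icc) hdisj]
  -- change variables in each integral
  have hle : ∀ m : ℤ, (m : ℝ) * L ≤ (m : ℝ) * L + c * L := by
    intro m; nlinarith
  have key : ∀ m : ℤ, ∫⁻ y in Set.Icc ((m : ℝ) * L) ((m : ℝ) * L + c * L),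
      ENNReal.ofReal (P_Y y)
      = ∫⁻ σ in Set.Icc (0 : ℝ) c, ENNReal.ofReal (L * P_Y (((m : ℝ) + σ) * L)) := by
    intro m
    have hint1 : IntegrableOn P_Y (Set.Icc ((m : ℝ) * L) ((m : ℝ) * L + c * L)) :=
      hPYc.integrableOn_Icc
    have hint2 : IntegrableOn (fun σ => L * P_Y (((m : ℝ) + σ) * L)) (Set.Icc (0 : ℝ) c) := by
      apply Continuous.integrableOn_Icc
      continuity
    rw [← ofReal_integral_eq_lintegral_ofReal hint1
        (Filter.Eventually.of_forall fun y => hPYnn y),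
      ← ofReal_integral_eq_lintegral_ofReal hint2
        (Filter.Eventually.of_forall fun y => mul_nonneg hL.le (hPYnn _))]
    congr 1
    rw [MeasureTheory.integral_Icc_eq_integral_Ioc, MeasureTheory.integral_Icc_eq_integral_Ioc,
      ← intervalIntegral.integral_of_le (hle m), ← intervalIntegral.integral_of_le hc0]
    have := intervalIntegral.integral_comp_mul_add P_Y hL.ne' ((m : ℝ) * L) (a := 0) (b := c)
    simp only [smul_eq_mul] at this
    have heq : (fun σ => L * P_Y (((m : ℝ) + σ) * L)) = fun σ => L * P_Y (L * σ + (m : ℝ) * L) := by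
      funext σ; ring_nf
    calc ∫ y in (m : ℝ) * L..(m : ℝ) * L + c * L, P_Y y
        = ∫ y in L * 0 + (m : ℝ) * L..L * c + (m : ℝ) * L, P_Y y := by ring_nf
      _ = L * ∫ σ in (0 : ℝ)..c, P_Y (L * σ + (m : ℝ) * L) := by
          rw [this]; field_simp
      _ = ∫ σ in (0 : ℝ)..c, L * P_Y (L * σ + (m : ℝ) * L) := by
          rw [← intervalIntegral.integral_const_mul]
      _ = ∫ σ in (0 : ℝ)..c, L * P_Y (((m : ℝ) + σ) * L) := by
          rw [show (fun σ => L * P_Y (((m : ℝ) + σ) * L))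
              = fun σ => L * P_Y (L * σ + (m : ℝ) * L) from heq]
  simp_rw [key]
  have hmeas : ∀ m : ℤ, Continuous fun σ : ℝ => L * P_Y (((m : ℝ) + σ) * L) := fun m =>
    continuous_const.mul (hPYc.comp ((continuous_const.add continuous_id).mul continuous_const))
  rw [← lintegral_tsum (fun m => ((hmeas m).measurable.ennreal_ofReal.aemeasurable))]
  have hpt : ∀ σ ∈ Set.Icc (0 : ℝ) c,
      ∑' m : ℤ, ENNReal.ofReal (L * P_Y (((m : ℝ) + σ) * L)) = 1 := by
    intro σ hσ
    have hσ' : σ ∈ Set.Ico (0 : ℝ) 1 := ⟨hσ.1, lt_of_le_of_lt hσ.2 hc1⟩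
    have htr := htrap σ hσ'
    have hsum : Summable fun m : ℤ => P_Y (((m : ℝ) + σ) * L) := by
      by_contra h
      rw [tsum_eq_zero_of_not_summable h, mul_zero] at htr
      exact one_ne_zero htr.symm
    have hsum' : Summable fun m : ℤ => L * P_Y (((m : ℝ) + σ) * L) := hsum.mul_left L
    rw [← ENNReal.ofReal_tsum_of_nonneg (fun m => mul_nonneg hL.le (hPYnn _)) hsum',
      tsum_mul_left, htr, ENNReal.ofReal_one]
  calc ∫⁻ σ in Set.Icc (0 : ℝ) c, ∑' m : ℤ, ENNReal.ofReal (L * P_Y (((m : ℝ) + σ) * L))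
      = ∫⁻ _ in Set.Icc (0 : ℝ) c, 1 := by
        apply setLIntegral_congr_fun measurableSet_Icc
        exact hpt
    _ = volume (Set.Icc (0 : ℝ) c) := by simp
    _ = ENNReal.ofReal c := by rw [Real.volume_Icc, sub_zero]
end

section
/- For every h with 0 < h < 2π, h · Σ_{m∈ℤ} sinc(mh) = π, where sinc(x) = sin(x)/x for x ≠ 0 and sinc(0) = 1; equivalently the trapezoidal sum with any step h ∈ (0, 2π) equals ∫_{-∞}^{∞} sinc(x) dx = π. -/
open MeasureTheory Filter

noncomputable def sinc (x : ℝ) : ℝ := if x = 0 then 1 else Real.sin x / x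

open Finset Complex

lemma sin_partial_bounded (h : ℝ) (h0 : 0 < h) (h2 : h < 2 * Real.pi) :
    ∃ b : ℝ, ∀ n : ℕ, ‖∑ i ∈ range n, Real.sin ((i + 1) * h)‖ ≤ b := by
  set w : ℂ := Complex.exp (h * Complex.I) with hw
  have hw1 : w ≠ 1 := by
    rw [hw, Ne, Complex.exp_eq_one_iff]
    rintro ⟨n, hn⟩
    have : (h : ℂ) = n * (2 * Real.pi) := by
      have hn' : (h : ℂ) * Complex.I = (n * (2 * Real.pi)) * Complex.I := by
        rw [hn]; push_cast; ring
      exact mul_right_cancel₀ Complex.I_ne_zero hn' 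
    have hr : h = (n : ℝ) * (2 * Real.pi) := by exact_mod_cast this
    have hpi := Real.pi_pos
    rcases lt_trichotomy (n : ℝ) 0 with hn' | hn' | hn'
    · nlinarith
    · rw [hn'] at hr; nlinarith
    · have : (1 : ℝ) ≤ (n : ℝ) := by exact_mod_cast (show (1:ℤ) ≤ n by exact_mod_cast (by nlinarith : (0:ℝ) < (n:ℝ)))
      nlinarith
  have hnw : ∀ n : ℕ, ‖w ^ n‖ = 1 := by
    intro n
    rw [hw, ← Complex.exp_nat_mul]
    have : ((n : ℂ) * (h * Complex.I)) = ((n * h : ℝ) : ℂ) * Complex.I := by push_cast; ring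
    rw [this, Complex.norm_exp_ofReal_mul_I]
  refine ⟨2 / ‖w - 1‖, fun n => ?_⟩
  have key : ∑ i ∈ range n, Real.sin ((i + 1) * h) = (∑ i ∈ range n, w ^ (i + 1)).im := by
    rw [Complex.im_sum]
    refine Finset.sum_congr rfl fun i _ => ?_
    rw [hw, ← Complex.exp_nat_mul]
    have : ((i + 1 : ℕ) : ℂ) * (h * Complex.I) = (((i + 1 : ℕ) * h : ℝ) : ℂ) * Complex.I := by
      push_cast; ring
    rw [this, Complex.exp_ofReal_mul_I_im]
    push_cast; ring_nf
  rw [key]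
  have : ∑ i ∈ range n, w ^ (i + 1) = w * ((w ^ n - 1) / (w - 1)) := by
    rw [← geom_sum_eq hw1]
    rw [Finset.mul_sum]
    exact Finset.sum_congr rfl fun i _ => by ring
  calc |(∑ i ∈ range n, w ^ (i + 1)).im| ≤ ‖∑ i ∈ range n, w ^ (i + 1)‖ :=
        Complex.abs_im_le_norm _
    _ = ‖w‖ * (‖w ^ n - 1‖ / ‖w - 1‖) := by rw [this, norm_mul, norm_div]
    _ ≤ 1 * ((‖w ^ n‖ + ‖(1:ℂ)‖) / ‖w - 1‖) := by
        gcongr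
        · rw [show w = w ^ 1 by ring]; exact (hnw 1).le
        · exact norm_sub_le _ _
    _ = 2 / ‖w - 1‖ := by rw [hnw n]; norm_num

lemma arg_one_sub_exp (h : ℝ) (h0 : 0 < h) (h2 : h < 2 * Real.pi) :
    Complex.arg (1 - Complex.exp (h * Complex.I)) = (h - Real.pi) / 2 := by
  have hpi := Real.pi_pos
  have hs : 0 < Real.sin (h / 2) := Real.sin_pos_of_pos_of_lt_pi (by linarith) (by linarith)
  set θ : ℝ := (h - Real.pi) / 2 with hθ
  have key : (1 : ℂ) - Complex.exp (h * Complex.I) =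
      ((2 * Real.sin (h / 2) : ℝ) : ℂ) * (Complex.cos θ + Complex.sin θ * Complex.I) := by
    rw [← Complex.ofReal_cos, ← Complex.ofReal_sin]
    apply Complex.ext
    · simp only [Complex.sub_re, Complex.one_re, Complex.exp_ofReal_mul_I_re, Complex.mul_re,
        Complex.add_re, Complex.ofReal_re, Complex.ofReal_im, Complex.mul_im, Complex.add_im,
        Complex.I_re, Complex.I_im]
      have e1 : Real.cos θ = Real.sin (h / 2) := by
        rw [hθ, show (h - Real.pi) / 2 = h / 2 - Real.pi / 2 by ring, Real.cos_sub_pi_div_two]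
      have e2 : Real.cos h = 1 - 2 * Real.sin (h / 2) ^ 2 := by
        have h3 := Real.cos_two_mul (h / 2)
        rw [show 2 * (h / 2) = h by ring] at h3
        have h4 := Real.sin_sq_add_cos_sq (h / 2)
        nlinarith
      rw [e1, e2]; ring
    · simp only [Complex.sub_im, Complex.one_im, Complex.exp_ofReal_mul_I_im, Complex.mul_im,
        Complex.add_im, Complex.ofReal_re, Complex.ofReal_im, Complex.mul_re, Complex.add_re,
        Complex.I_re, Complex.I_im]
      have e1 : Real.sin θ = -Real.cos (h / 2) := by
        rw [hθ, show (h - Real.pi) / 2 = h / 2 - Real.pi / 2 by ring, Real.sin_sub_pi_div_two]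
      have e2 : Real.sin h = 2 * Real.sin (h / 2) * Real.cos (h / 2) := by
        have h3 := Real.sin_two_mul (h / 2)
        rw [show 2 * (h / 2) = h by ring] at h3
        linarith
      rw [e1, e2]; ring
  rw [key, Complex.arg_real_mul _ (by positivity),
    Complex.arg_cos_add_sin_mul_I ⟨by rw [hθ]; linarith, by rw [hθ]; linarith⟩]

lemma sawtooth (h : ℝ) (h0 : 0 < h) (h2 : h < 2 * Real.pi) {l : ℝ}
    (hl : Tendsto (fun n : ℕ => ∑ i ∈ range n, Real.sin (i * h) / i) atTop (nhds l)) :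
    l = (Real.pi - h) / 2 := by
  set g : ℕ → ℝ := fun n => Real.sin (n * h) / n with hg
  set w : ℂ := Complex.exp (h * Complex.I) with hw
  have habel := Real.tendsto_tsum_powerSeries_nhdsWithin_lt hl
  have hwre : 0 < (1 - w).re := by
    have hc1 : Real.cos h < 1 := by
      rcases lt_or_eq_of_le (Real.cos_le_one h) with hc | hc
      · exact hc
      · exfalso
        rw [Real.cos_eq_one_iff] at hc
        obtain ⟨n, hn⟩ := hc
        have hpi := Real.pi_pos
        rcases lt_trichotomy (n : ℝ) 0 with hn' | hn' | hn'
        · nlinarith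
        · rw [hn'] at hn; nlinarith
        · have : (1 : ℝ) ≤ (n : ℝ) := by
            exact_mod_cast (show (1:ℤ) ≤ n by exact_mod_cast (by nlinarith : (0:ℝ) < (n:ℝ)))
          nlinarith
    have : (1 - w).re = 1 - Real.cos h := by
      rw [Complex.sub_re, Complex.one_re, hw, Complex.exp_ofReal_mul_I_re]
    rw [this]; linarith
  have hcont : Tendsto (fun x : ℝ => -(Complex.log (1 - (x : ℂ) * w)).im) (nhdsWithin 1 (Set.Iio 1))
      (nhds ((Real.pi - h) / 2)) := by
    have h1 : Tendsto (fun x : ℝ => 1 - (x : ℂ) * w) (nhds 1) (nhds (1 - w)) := by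
      have hcc : Continuous (fun x : ℝ => 1 - (x : ℂ) * w) := by continuity
      simpa using hcc.tendsto 1
    have h2' : ContinuousAt Complex.log (1 - w) := continuousAt_clog (Or.inl hwre)
    have h3 := (Complex.continuous_im.continuousAt.tendsto.comp (h2'.tendsto.comp h1)).neg
    have hval : -(Complex.log (1 - w)).im = (Real.pi - h) / 2 := by
      rw [Complex.log_im, hw, arg_one_sub_exp h h0 h2]; ring
    rw [hval] at h3
    exact h3.mono_left nhdsWithin_le_nhds
  have heq : ∀ᶠ x : ℝ in nhdsWithin 1 (Set.Iio 1),
      (∑' n : ℕ, g n * x ^ n) = -(Complex.log (1 - (x : ℂ) * w)).im := by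
    filter_upwards [Ioo_mem_nhdsLT_of_mem (show (1:ℝ) ∈ Set.Ioc 0 1 by norm_num)] with x hx
    have hxw : ‖(x : ℂ) * w‖ < 1 := by
      rw [norm_mul, hw, Complex.norm_exp_ofReal_mul_I,
        Complex.norm_real, Real.norm_eq_abs, mul_one, abs_of_pos hx.1]
      exact hx.2
    have hsum := Complex.hasSum_taylorSeries_neg_log hxw
    have him := ((Complex.hasSum_iff _ _).mp hsum).2
    have hcongr : (fun n : ℕ => (((x : ℂ) * w) ^ n / n).im) = fun n : ℕ => g n * x ^ n := by
      funext n
      have he : ((x : ℂ) * w) ^ n / n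
          = ((x ^ n / n : ℝ) : ℂ) * Complex.exp ((n * h : ℝ) * Complex.I) := by
        rw [mul_pow, hw, ← Complex.exp_nat_mul]
        have h4 : ((n : ℂ)) * ((h : ℂ) * Complex.I) = ((n * h : ℝ) : ℂ) * Complex.I := by
          push_cast; ring
        rw [h4]; push_cast; ring
      rw [he, Complex.mul_im, Complex.ofReal_re, Complex.ofReal_im, Complex.exp_ofReal_mul_I_im, hg]
      ring
    rw [hcongr] at him
    rw [him.tsum_eq, Complex.neg_im]
  have hfin := habel.congr' heq
  exact tendsto_nhds_unique hfin hcont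

lemma sin_div_converges (h : ℝ) (h0 : 0 < h) (h2 : h < 2 * Real.pi)
    (hb : ∃ b : ℝ, ∀ n : ℕ, ‖∑ i ∈ range n, Real.sin ((i + 1) * h)‖ ≤ b) :
    ∃ l : ℝ, Tendsto (fun n : ℕ => ∑ i ∈ range n, Real.sin ((i+1) * h) / (i+1)) atTop (nhds l) := by
  obtain ⟨b, hbd⟩ := hb
  have hanti : Antitone (fun n : ℕ => (1 : ℝ) / (n + 1)) := by
    intro m n hmn
    apply one_div_le_one_div_of_le (by positivity)
    exact_mod_cast by omega
  have h0' : Tendsto (fun n : ℕ => (1 : ℝ) / (n + 1)) atTop (nhds 0) :=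
    tendsto_one_div_add_atTop_nhds_zero_nat
  have hc := hanti.cauchySeq_series_mul_of_tendsto_zero_of_bounded h0'
    (z := fun i => Real.sin ((i + 1) * h)) hbd
  obtain ⟨l, hl⟩ := cauchySeq_tendsto_of_complete hc
  refine ⟨l, hl.congr fun n => Finset.sum_congr rfl fun i _ => ?_⟩
  simp [smul_eq_mul]
  ring

lemma sinc_neg (x : ℝ) : sinc (-x) = sinc x := by
  rcases eq_or_ne x 0 with rfl | hx
  · simp
  · rw [sinc, sinc, if_neg (by simpa using hx), if_neg hx, Real.sin_neg, neg_div_neg_eq]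

lemma trap_sum_eq (h : ℝ) (h0 : 0 < h) (N : ℕ) :
    h * ∑ m ∈ Finset.Icc (-(N : ℤ)) (N : ℤ), sinc (m * h)
      = h + 2 * ∑ i ∈ range N, Real.sin ((i + 1) * h) / (i + 1) := by
  induction N with
  | zero => simp [sinc]
  | succ N ih =>
    have hset : Finset.Icc (-(N+1 : ℤ)) (N+1 : ℤ)
        = insert (-(N+1 : ℤ)) (insert ((N+1 : ℤ)) (Finset.Icc (-(N : ℤ)) (N : ℤ))) := by
      ext m
      simp only [Finset.mem_Icc, Finset.mem_insert]
      omega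
    have h1 : (-(N+1 : ℤ)) ∉ insert ((N+1 : ℤ)) (Finset.Icc (-(N : ℤ)) (N : ℤ)) := by
      simp only [Finset.mem_insert, Finset.mem_Icc]
      omega
    have h2 : ((N+1 : ℤ)) ∉ Finset.Icc (-(N : ℤ)) (N : ℤ) := by
      simp only [Finset.mem_Icc]; omega
    push_cast
    push_cast at hset
    rw [hset, Finset.sum_insert h1, Finset.sum_insert h2]
    have hne : ((N : ℝ) + 1) * h ≠ 0 := by positivity
    have hv : sinc (((N : ℝ) + 1) * h) = Real.sin (((N : ℝ) + 1) * h) / (((N : ℝ) + 1) * h) := by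
      rw [sinc, if_neg hne]
    have hneg : (-((N : ℝ) + 1)) * h = -(((N : ℝ) + 1) * h) := by ring
    push_cast
    rw [hneg, sinc_neg, hv]
    rw [Finset.sum_range_succ]
    push_cast at ih
    have : h * (Real.sin (((N:ℝ) + 1) * h) / (((N:ℝ) + 1) * h))
        = Real.sin (((N:ℝ) + 1) * h) / ((N:ℝ) + 1) := by
      field_simp
    linear_combination ih + 2 * this

/-- For every step `h` with `0 < h < 2π`, the symmetric trapezoidal sum
`h · Σ_{m∈ℤ} sinc(mh)` converges to `π = ∫_{-∞}^{∞} sinc`. -/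
theorem sinc_trapezoidal_sum (h : ℝ) (h0 : 0 < h) (h2 : h < 2 * Real.pi) :
    Tendsto (fun N : ℕ => h * ∑ m ∈ Finset.Icc (-(N : ℤ)) (N : ℤ), sinc (m * h))
      atTop (nhds Real.pi) := by
  obtain ⟨l, hl⟩ := sin_div_converges h h0 h2 (sin_partial_bounded h h0 h2)
  have hshift : ∀ n : ℕ, ∑ i ∈ range (n + 1), Real.sin (i * h) / i
      = ∑ i ∈ range n, Real.sin ((i + 1) * h) / (i + 1) := by
    intro n
    rw [Finset.sum_range_succ']
    simp
  have hl' : Tendsto (fun n : ℕ => ∑ i ∈ range n, Real.sin (i * h) / i) atTop (nhds l) := by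
    refine (tendsto_add_atTop_iff_nat 1).mp ?_
    exact hl.congr fun n => (hshift n).symm
  have hval : l = (Real.pi - h) / 2 := sawtooth h h0 h2 hl'
  have hfin : Tendsto (fun N : ℕ => h + 2 * ∑ i ∈ range N, Real.sin ((i + 1) * h) / (i + 1))
      atTop (nhds Real.pi) := by
    have := (hl.const_mul 2).const_add h
    rw [hval] at this
    convert this using 2
    ring
  exact hfin.congr fun N => (trap_sum_eq h h0 N).symm
end

section
/- Let a > 0 and let b ≥ 2 be an integer with ln b < π/a. Then the random variable X on (0,∞) with density P_X(x) = (a/(π x)) sinc²(a ln x) satisfies the strong Benford law in base b: P(1 ≤ S(X) ≤ s) = log_b s for all s ∈ [1, b). -/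
open MeasureTheory

namespace BenfordAux

open Complex Set Filter
open Real hiding sinc

lemma measurable_sinc : Measurable sinc := by
  unfold sinc
  exact Measurable.ite (measurableSet_eq_fun measurable_id measurable_const)
    measurable_const (Real.measurable_sin.div measurable_id)

lemma sinc_of_ne (x : ℝ) (hx : x ≠ 0) : sinc x = Real.sin x / x := if_neg hx

noncomputable def wz (z : ℝ) : ℂ := Complex.exp (2 * Real.pi * z * Complex.I)

noncomputable def Az (z : ℝ) : ℂ := -4 * (Real.pi : ℂ) ^ 2 * wz z / (wz z - 1) ^ 2

noncomputable def Bz (z : ℝ) : ℂ := -2 * (Real.pi : ℂ) * wz z / (wz z - 1)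

noncomputable def gz (z : ℝ) : ℝ → ℂ := fun α =>
  (Az z + Bz z * α) * Complex.exp (-(z * α) * Complex.I)

lemma wz_ne_zero (z : ℝ) : wz z ≠ 0 := Complex.exp_ne_zero _

lemma wz_ne_one {z : ℝ} (hz : ∀ n : ℤ, z + n ≠ 0) : wz z ≠ 1 := by
  intro h
  rw [wz, Complex.exp_eq_one_iff] at h
  obtain ⟨n, hn⟩ := h
  have h2 : (2 * (Real.pi : ℂ) * Complex.I) ≠ 0 := by
    simp [Real.pi_ne_zero, Complex.I_ne_zero]
  have hzn : (z : ℂ) = n :=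
    mul_right_cancel₀ h2 (by rw [← hn]; ring)
  have hz' : z = (n : ℝ) := by exact_mod_cast hzn
  exact hz (-n) (by simp [hz'])

lemma exp_neg_two_pi_z (z : ℝ) :
    Complex.exp (-(↑z * ↑(2 * Real.pi)) * Complex.I) = (wz z)⁻¹ := by
  rw [wz, ← Complex.exp_neg]
  congr 1
  push_cast
  ring

lemma gz_endpoint {z : ℝ} (hz : ∀ n : ℤ, z + n ≠ 0) : gz z 0 = gz z (2 * Real.pi) := by
  have hw0 := wz_ne_zero z
  have hw1 : wz z - 1 ≠ 0 := sub_ne_zero.mpr (wz_ne_one hz)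
  rw [gz, gz, exp_neg_two_pi_z]
  simp only [Complex.ofReal_zero, mul_zero, zero_mul, neg_zero, Complex.exp_zero, mul_one,
    add_zero]
  rw [Az, Bz]
  push_cast
  field_simp
  ring

lemma summable_coeff {z : ℝ} (hz : ∀ n : ℤ, z + n ≠ 0) :
    Summable (fun n : ℤ => 1 / ((z : ℂ) + n) ^ 2) := by
  have hg : Summable (fun n : ℤ => 4 / (n : ℝ) ^ 2) := by
    have h1 : Summable (fun n : ℤ => 1 / (n : ℝ) ^ 2) :=
      summable_one_div_int_pow.mpr one_lt_two
    have := h1.mul_left 4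
    refine this.congr fun n => ?_
    ring
  refine Summable.of_norm_bounded_eventually hg ?_
  rw [Filter.eventually_cofinite]
  apply Set.Finite.subset (Set.finite_Icc (⌈-(2*|z|)⌉ - 1) (⌊2*|z|⌋ + 1))
  intro n hn
  simp only [Set.mem_setOf_eq] at hn
  by_contra hmem
  apply hn
  have hn2 : 2 * |z| ≤ |(n : ℝ)| := by
    simp only [Set.mem_Icc, not_and_or, not_le] at hmem
    rcases hmem with hmem | hmem
    · have h1 : (n : ℝ) ≤ (⌈-(2*|z|)⌉ : ℝ) - 1 := by
        have : n ≤ ⌈-(2*|z|)⌉ - 1 := Int.le_of_lt_add_one (by omega)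
        exact_mod_cast this
      have h2 : (n : ℝ) < -(2*|z|) := lt_of_le_of_lt h1 (by
        have := Int.ceil_lt_add_one (-(2*|z|)); linarith)
      rw [abs_of_neg (by nlinarith [abs_nonneg z] : (n:ℝ) < 0)]
      linarith
    · have h1 : (⌊2*|z|⌋ + 1 : ℝ) ≤ n := by
        have h3 : ⌊2*|z|⌋ + 1 ≤ n := le_of_lt hmem
        exact_mod_cast h3
      have h2 : 2*|z| < (n : ℝ) := lt_of_lt_of_le (by
        have := Int.lt_floor_add_one (2*|z|); linarith) h1
      rw [abs_of_pos (by nlinarith [abs_nonneg z] : (0:ℝ) < n)]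
      linarith
  have hzn : |(n : ℝ)| / 2 ≤ |z + n| := by
    have h1 : |(n : ℝ)| - |z| ≤ |z + n| := by
      have h2 : |(n:ℝ)| ≤ |z + n| + |z| := by
        have h3 : |(z + (n:ℝ)) - z| ≤ |z + (n:ℝ)| + |z| := abs_sub _ _
        simpa using h3
      linarith
    linarith [abs_nonneg z]
  have hnorm : ‖1 / ((z : ℂ) + n) ^ 2‖ = 1 / |z + (n:ℝ)| ^ 2 := by
    have h : ((z : ℂ) + n) = ((z + n : ℝ) : ℂ) := by push_cast; ring
    rw [h]
    rw [norm_div, norm_one, norm_pow, Complex.norm_real]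
    rfl
  rw [hnorm]
  have h0 : (n : ℝ) ≠ 0 := by
    intro h0
    have hz0 : |z| ≤ 0 := by
      have := hn2; rw [h0, abs_zero] at this; linarith
    have : z = 0 := abs_eq_zero.mp (le_antisymm hz0 (abs_nonneg z))
    exact hz n (by rw [this, h0]; ring)
  have hpos : (0:ℝ) < |(n:ℝ)| := abs_pos.mpr h0
  have habs : (0:ℝ) < |z + (n:ℝ)| := by linarith
  rw [div_le_div_iff₀ (by positivity) (by positivity)]
  have hsq : |(n:ℝ)| ^ 2 / 4 ≤ |z + (n:ℝ)| ^ 2 := by nlinarith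
  nlinarith [hsq, _root_.sq_abs (n:ℝ)]

lemma aux_alg (A B c w : ℂ) (hc : c ≠ 0) (hw : w ≠ 0) :
    (w * A / c - B / c ^ 2) * w⁻¹ - ((A + 0) / c - B / c ^ 2) = B / c ^ 2 * (1 - w⁻¹) := by
  have h1 : c ^ 6 * c⁻¹ ^ 6 = 1 := by
    rw [← mul_pow, mul_inv_cancel₀ hc, one_pow]
  have h2 : w * w⁻¹ = 1 := mul_inv_cancel₀ hw
  field_simp
  ring

/-- The Fourier coefficients of `gz z` on `[0, 2π]`. -/
lemma fourierCoeffOn_gz {z : ℝ} (hz : ∀ n : ℤ, z + n ≠ 0)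
    (hab : (0:ℝ) < 0 + 2 * Real.pi) (n : ℤ) :
    fourierCoeffOn hab (gz z) n = 1 / ((z : ℂ) + n) ^ 2 := by
  have hw0 := wz_ne_zero z
  have hw1 : wz z - 1 ≠ 0 := sub_ne_zero.mpr (wz_ne_one hz)
  have hzn : (z : ℂ) + n ≠ 0 := by
    intro h
    apply hz n
    have : ((z + n : ℝ) : ℂ) = 0 := by push_cast; rw [← h]
    exact_mod_cast this
  set c : ℂ := -((z : ℂ) + n) * Complex.I with hc
  have hcne : c ≠ 0 := by
    rw [hc]
    exact mul_ne_zero (neg_ne_zero.mpr hzn) Complex.I_ne_zero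
  set A := Az z with hA
  set B := Bz z with hB
  have hexpd : ∀ x : ℝ, HasDerivAt (fun y : ℝ => Complex.exp (c * y))
      (c * Complex.exp (c * x)) x := by
    intro x
    have h1 : HasDerivAt (fun y : ℝ => c * (y:ℂ)) c x := by
      simpa using (Complex.ofRealCLM.hasDerivAt (x := x)).const_mul c
    simpa [mul_comm] using h1.cexp
  have hlin : ∀ x : ℝ, HasDerivAt (fun y : ℝ => (A + B * (y:ℂ)) / c - B / c ^ 2)
      (B / c) x := by
    intro x
    have h1 : HasDerivAt (fun y : ℝ => (y : ℂ)) 1 x := Complex.ofRealCLM.hasDerivAt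
    have h2 := (((h1.const_mul B).const_add A).div_const c).sub_const (B / c ^ 2)
    simpa using h2
  have hderiv : ∀ x : ℝ, HasDerivAt
      (fun y : ℝ => ((A + B * (y:ℂ)) / c - B / c ^ 2) * Complex.exp (c * y))
      ((A + B * (x:ℂ)) * Complex.exp (c * x)) x := by
    intro x
    have h := (hlin x).mul (hexpd x)
    refine h.congr_deriv ?_
    have he := Complex.exp_ne_zero (c * (x:ℂ))
    field_simp
    ring
  rw [fourierCoeffOn_eq_integral]
  have hptw : ∀ x : ℝ, (fourier (-n) (x : AddCircle (0 + 2 * Real.pi - 0)) : ℂ) • gz z x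
      = (A + B * (x:ℂ)) * Complex.exp (c * x) := by
    intro x
    rw [fourier_coe_apply, gz, smul_eq_mul]
    rw [← mul_assoc, mul_comm ((Complex.exp _)) (Az z + Bz z * (x:ℂ)), mul_assoc,
        ← Complex.exp_add]
    rw [← hA, ← hB]
    congr 2
    have hπ : (Real.pi : ℂ) ≠ 0 := by exact_mod_cast Real.pi_ne_zero
    rw [hc]
    push_cast
    field_simp
    ring
  rw [intervalIntegral.integral_congr (fun x _ => hptw x)]
  rw [intervalIntegral.integral_eq_sub_of_hasDerivAt (fun x _ => hderiv x)
    ((Continuous.intervalIntegrable (by fun_prop) _ _))]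
  have hexp2 : Complex.exp (c * ((0 + 2 * Real.pi : ℝ) : ℂ)) = (wz z)⁻¹ := by
    have harg : c * ((0 + 2 * Real.pi : ℝ) : ℂ)
        = -(2 * Real.pi * z * Complex.I) + ((-n : ℤ) : ℂ) * (2 * Real.pi * Complex.I) := by
      rw [hc]; push_cast; ring
    rw [harg, Complex.exp_add, Complex.exp_int_mul_two_pi_mul_I, mul_one, wz,
      ← Complex.exp_neg]
  have h20 : ((0 + 2 * Real.pi : ℝ) : ℂ) = 2 * (Real.pi : ℂ) := by push_cast; ring
  rw [hexp2]
  simp only [Complex.ofReal_zero, mul_zero, Complex.exp_zero, mul_one, zero_add, sub_zero]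
  have hπ : (Real.pi : ℂ) ≠ 0 := by exact_mod_cast Real.pi_ne_zero
  have h2 : A + B * ((2 * Real.pi : ℝ) : ℂ) = wz z * A := by
    rw [hA, hB, Az, Bz]; push_cast; field_simp; ring
  rw [h2]
  rw [aux_alg A B c (wz z) hcne hw0]
  have hB1 : B * (1 - (wz z)⁻¹) = -(2 * (Real.pi : ℂ)) := by
    rw [hB, Bz]; field_simp
  have hc2 : c ^ 2 = -(((z : ℂ) + n) ^ 2) := by
    rw [hc, mul_pow, Complex.I_sq]; ring
  rw [Complex.real_smul, div_mul_eq_mul_div, hB1, hc2]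
  push_cast
  field_simp


lemma continuous_gz (z : ℝ) : Continuous (gz z) := by
  unfold gz
  fun_prop

/-- Pointwise sum of the Fourier series of `gz z` on `[0, 2π)`. -/
lemma hasSum_gz {z : ℝ} (hz : ∀ n : ℤ, z + n ≠ 0) {α : ℝ}
    (hα : α ∈ Set.Ico (0:ℝ) (2 * Real.pi)) :
    HasSum (fun n : ℤ => (1 / ((z : ℂ) + n) ^ 2) * Complex.exp (n * α * Complex.I))
      (gz z α) := by
  haveI : Fact ((0:ℝ) < 2 * Real.pi) := ⟨by positivity⟩
  set G : C(AddCircle (2 * Real.pi), ℂ) :=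
    ⟨AddCircle.liftIco (2 * Real.pi) 0 (gz z),
      AddCircle.liftIco_zero_continuous (by rw [gz_endpoint hz])
        (continuous_gz z).continuousOn⟩ with hG
  have hcoeff : ∀ n : ℤ, fourierCoeff (G : AddCircle (2 * Real.pi) → ℂ) n
      = 1 / ((z : ℂ) + n) ^ 2 := by
    intro n
    have h1 : fourierCoeff (AddCircle.liftIco (2 * Real.pi) 0 (gz z)) n
        = fourierCoeffOn (lt_add_of_pos_right 0 (Fact.out : (0:ℝ) < 2 * Real.pi)) (gz z) n :=
      fourierCoeff_liftIco_eq (gz z) n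
    rw [hG]
    exact h1.trans (fourierCoeffOn_gz hz _ n)
  have hsummable : Summable (fun n => fourierCoeff (G : AddCircle (2 * Real.pi) → ℂ) n) :=
    (summable_coeff hz).congr (fun n => (hcoeff n).symm)
  have hps := has_pointwise_sum_fourier_series_of_summable hsummable
    (α : AddCircle (2 * Real.pi))
  have heq : ∀ i : ℤ, fourierCoeff (G : AddCircle (2 * Real.pi) → ℂ) i
      • fourier i (α : AddCircle (2 * Real.pi))
      = (1 / ((z : ℂ) + i) ^ 2) * Complex.exp (i * α * Complex.I) := by
    intro i
    rw [hcoeff i, fourier_coe_apply, smul_eq_mul]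
    congr 1
    have h2π : (2:ℂ) * (Real.pi:ℂ) ≠ 0 := by simp [Real.pi_ne_zero]
    push_cast
    congr 1
    rw [div_eq_iff h2π]
    ring
  rw [funext heq] at hps
  have hGα : G (α : AddCircle (2 * Real.pi)) = gz z α := by
    show AddCircle.liftIco (2 * Real.pi) 0 (gz z) (α : AddCircle (2 * Real.pi)) = gz z α
    apply AddCircle.liftIco_coe_apply
    simpa using hα
  rwa [hGα] at hps

lemma re_w_div {z : ℝ} (hz : ∀ n : ℤ, z + n ≠ 0) :
    (wz z / (wz z - 1)).re = 1 / 2 := by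
  have hw0 := wz_ne_zero z
  have hw1 : wz z - 1 ≠ 0 := sub_ne_zero.mpr (wz_ne_one hz)
  have hw2 : (1:ℂ) - wz z ≠ 0 := sub_ne_zero.mpr (fun h => wz_ne_one hz h.symm)
  have hconj : (starRingEnd ℂ) (wz z) = (wz z)⁻¹ := by
    rw [wz, ← Complex.exp_conj, ← Complex.exp_neg]
    congr 1
    simp only [map_mul, Complex.conj_I, Complex.conj_ofReal, map_ofNat]
    ring
  have hw1' : (wz z)⁻¹ - 1 ≠ 0 := by
    have he : (wz z)⁻¹ - 1 = (1 - wz z) / wz z := by field_simp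
    rw [he]
    exact div_ne_zero (sub_ne_zero.mpr fun h => (wz_ne_one hz) h.symm) hw0
  have h1 : wz z / (wz z - 1) + (starRingEnd ℂ) (wz z / (wz z - 1)) = 1 := by
    rw [map_div₀, map_sub, map_one, hconj]
    have hsec : (wz z)⁻¹ / ((wz z)⁻¹ - 1) = 1 / (1 - wz z) := by
      rw [div_eq_div_iff hw1' hw2]
      field_simp
    rw [hsec]
    field_simp
    ring
  have h2 := Complex.add_conj (wz z / (wz z - 1))
  rw [h1] at h2
  have h3 : (1 : ℝ) = 2 * (wz z / (wz z - 1)).re := by exact_mod_cast h2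
  linarith

/-- Key identity: for `0 < θ < π`, `∑ₖ sinc(x + kθ)² = π / θ`. -/
lemma key {θ : ℝ} (hθ0 : 0 < θ) (hθπ : θ < Real.pi) {x : ℝ}
    (hx : ∀ k : ℤ, x + k * θ ≠ 0) :
    HasSum (fun k : ℤ => sinc (x + k * θ) ^ 2) (Real.pi / θ) := by
  set z : ℝ := x / θ with hzdef
  have hθne : θ ≠ 0 := ne_of_gt hθ0
  have hxe : ∀ n : ℤ, x + n * θ = θ * (z + n) := by
    intro n
    rw [hzdef]
    field_simp
  have hz : ∀ n : ℤ, z + n ≠ 0 := by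
    intro n h
    apply hx n
    rw [hxe n, h, mul_zero]
  set α : ℝ := 2 * θ with hαdef
  have hα : α ∈ Set.Ico (0:ℝ) (2 * Real.pi) :=
    ⟨by positivity, by rw [hαdef]; linarith⟩
  have h0mem : (0:ℝ) ∈ Set.Ico (0:ℝ) (2 * Real.pi) := ⟨le_refl 0, by positivity⟩
  have h1 := hasSum_gz hz hα
  have h0 := hasSum_gz hz h0mem
  have h0' : HasSum (fun n : ℤ => 1 / ((z : ℂ) + n) ^ 2) (Az z) := by
    have h0'' := h0
    simp only [Complex.ofReal_zero, mul_zero, zero_mul, Complex.exp_zero, mul_one] at h0''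
    have hgz0 : gz z 0 = Az z := by
      simp [gz]
    rwa [hgz0] at h0''
  have h2 := h0'.sub (h1.mul_left (Complex.exp ((z : ℂ) * α * Complex.I)))
  have hval : Az z - Complex.exp ((z : ℂ) * α * Complex.I) * gz z α = -(Bz z) * α := by
    rw [gz]
    have hee : Complex.exp ((z : ℂ) * α * Complex.I)
        * ((Az z + Bz z * α) * Complex.exp (-((z : ℝ) * α) * Complex.I))
        = Az z + Bz z * α := by
      rw [mul_comm (Complex.exp ((z : ℂ) * α * Complex.I)) _, mul_assoc, ← Complex.exp_add,
        show -((z:ℂ) * (α:ℂ)) * Complex.I + (z:ℂ) * (α:ℂ) * Complex.I = 0 by push_cast; ring,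
        Complex.exp_zero, mul_one]
    rw [hee]
    ring
  rw [hval] at h2
  have h3 := h2.mapL Complex.reCLM
  have h4 := h3.mul_left (1 / (2 * θ ^ 2))
  have hterm : (fun n : ℤ => (1 / (2 * θ ^ 2)) * Complex.reCLM
      (1 / ((z : ℂ) + n) ^ 2 - Complex.exp ((z : ℂ) * α * Complex.I)
        * (1 / ((z : ℂ) + n) ^ 2 * Complex.exp (n * α * Complex.I))))
      = (fun k : ℤ => sinc (x + k * θ) ^ 2) := by
    funext n
    have hzn : z + (n : ℝ) ≠ 0 := by exact_mod_cast hz n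
    have hcomb : 1 / ((z : ℂ) + n) ^ 2 - Complex.exp ((z : ℂ) * α * Complex.I)
        * (1 / ((z : ℂ) + n) ^ 2 * Complex.exp (n * α * Complex.I))
        = (1 - Complex.exp ((((z + n) * α : ℝ) : ℂ) * Complex.I))
          / ((((z + n) ^ 2 : ℝ)) : ℂ) := by
      rw [show Complex.exp ((z : ℂ) * α * Complex.I) * (1 / ((z : ℂ) + n) ^ 2
          * Complex.exp (n * α * Complex.I))
          = Complex.exp ((z : ℂ) * α * Complex.I + n * α * Complex.I) / ((z : ℂ) + n) ^ 2 by
        rw [Complex.exp_add]; ring]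
      rw [show ((z : ℂ) * α * Complex.I + n * α * Complex.I)
          = (((z + n) * α : ℝ) : ℂ) * Complex.I by push_cast; ring]
      rw [show ((((z + n) ^ 2 : ℝ)) : ℂ) = ((z : ℂ) + n) ^ 2 by push_cast; ring]
      ring
    rw [hcomb]
    have hre : Complex.reCLM ((1 - Complex.exp ((((z + n) * α : ℝ) : ℂ) * Complex.I))
        / ((((z + n) ^ 2 : ℝ)) : ℂ))
        = (1 - Real.cos ((z + n) * α)) / ((z + n) ^ 2) := by
      rw [show (Complex.reCLM : ℂ →L[ℝ] ℝ) ((1 - Complex.exp ((((z + n) * α : ℝ) : ℂ)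
          * Complex.I)) / ((((z + n) ^ 2 : ℝ)) : ℂ))
          = ((1 - Complex.exp ((((z + n) * α : ℝ) : ℂ) * Complex.I))
            / ((((z + n) ^ 2 : ℝ)) : ℂ)).re from rfl]
      rw [Complex.div_ofReal_re, Complex.sub_re, Complex.one_re,
        Complex.exp_ofReal_mul_I_re]
    rw [hre]
    rw [sinc_of_ne _ (hx n)]
    have hu : (z + (n:ℝ)) * α = 2 * (x + n * θ) := by
      rw [hαdef, hxe n]; ring
    rw [hu, Real.cos_two_mul]
    have hsin : Real.sin (x + n * θ) ^ 2 = 1 - Real.cos (x + n * θ) ^ 2 := by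
      have := Real.sin_sq_add_cos_sq (x + n * θ); linarith
    have hzn2 : (z + (n:ℝ)) ^ 2 ≠ 0 := pow_ne_zero 2 hzn
    have hxn : x + (n:ℝ) * θ = θ * (z + n) := hxe n
    rw [div_pow, hxn]
    field_simp
    nlinarith [Real.sin_sq_add_cos_sq (θ * (z + (n:ℝ)))]
  have hv : (1 / (2 * θ ^ 2)) * Complex.reCLM (-(Bz z) * (α : ℝ)) = Real.pi / θ := by
    have hBe : -(Bz z) * ((α : ℝ) : ℂ) = (((2 * Real.pi * α : ℝ)) : ℂ)
        * (wz z / (wz z - 1)) := by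
      rw [Bz]
      push_cast
      ring
    rw [show (Complex.reCLM : ℂ →L[ℝ] ℝ) (-(Bz z) * ((α : ℝ) : ℂ))
        = (-(Bz z) * ((α : ℝ) : ℂ)).re from rfl]
    rw [hBe, Complex.re_ofReal_mul, re_w_div hz, hαdef]
    field_simp
  rw [hterm, hv] at h4
  exact h4

lemma lintegral_image_deriv {s : Set ℝ} {f f' : ℝ → ℝ}
    (hs : MeasurableSet s) (hf' : ∀ x ∈ s, HasDerivWithinAt f (f' x) s x)
    (hf : Set.InjOn f s) (g : ℝ → ENNReal) :
    ∫⁻ x in f '' s, g x = ∫⁻ x in s, ENNReal.ofReal |f' x| * g (f x) := by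
  simpa only [ContinuousLinearMap.det_toSpanSingleton] using
    lintegral_image_eq_lintegral_abs_det_fderiv_mul volume hs
      (fun x hx => (hf' x hx).hasFDerivWithinAt) hf g

lemma benford_integral (a L t : ℝ) (ha : 0 < a) (hL : 0 < L) (haL : a * L < Real.pi)
    (ht0 : 0 ≤ t) (ht1 : t < 1) :
    ∫⁻ x in {x : ℝ | Int.fract (Real.log x / L) ≤ t},
      ENNReal.ofReal (Set.indicator (Set.Ioi 0)
        (fun x => a / (Real.pi * x) * sinc (a * Real.log x) ^ 2) x)
      = ENNReal.ofReal t := by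
  have hπ := Real.pi_pos
  set f : ℝ → ℝ := fun x => a / (Real.pi * x) * sinc (a * Real.log x) ^ 2 with hf
  set A : Set ℝ := {x : ℝ | Int.fract (Real.log x / L) ≤ t} with hA
  have hAm : MeasurableSet A :=
    measurableSet_le (measurable_fract.comp (Real.measurable_log.div_const L))
      measurable_const
  set B : Set ℝ := {y : ℝ | Int.fract (y / L) ≤ t} with hB
  have hBm : MeasurableSet B :=
    measurableSet_le (measurable_fract.comp (measurable_id.div_const L)) measurable_const
  -- step 1: indicator
  have h1 : ∫⁻ x in A, ENNReal.ofReal (Set.indicator (Set.Ioi 0) f x)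
      = ∫⁻ x in Set.Ioi (0:ℝ) ∩ A, ENNReal.ofReal (f x) := by
    have hpt : ∀ x, ENNReal.ofReal (Set.indicator (Set.Ioi 0) f x)
        = Set.indicator (Set.Ioi 0) (fun x => ENNReal.ofReal (f x)) x := by
      intro x
      by_cases hx : x ∈ Set.Ioi (0:ℝ)
      · simp [Set.indicator_of_mem, hx]
      · simp [Set.indicator_of_notMem, hx]
    rw [lintegral_congr hpt, lintegral_indicator measurableSet_Ioi,
      Measure.restrict_restrict measurableSet_Ioi]
  rw [h1]
  -- step 2: image
  have himg : Real.exp '' B = Set.Ioi (0:ℝ) ∩ A := by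
    ext x
    constructor
    · rintro ⟨y, hy, rfl⟩
      exact ⟨Real.exp_pos y, by simpa [hA, hB, Real.log_exp] using hy⟩
    · rintro ⟨hx0, hxA⟩
      exact ⟨Real.log x, by simpa [hA, hB] using hxA, Real.exp_log hx0⟩
  rw [← himg, lintegral_image_deriv hBm
    (fun y _ => (Real.hasDerivAt_exp y).hasDerivWithinAt) Real.exp_injective.injOn]
  -- step 3: simplify integrand
  have h2 : ∀ y : ℝ, ENNReal.ofReal |Real.exp y| * ENNReal.ofReal (f (Real.exp y))
      = ENNReal.ofReal (a / Real.pi * sinc (a * y) ^ 2) := by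
    intro y
    rw [abs_of_pos (Real.exp_pos y), hf]
    simp only [Real.log_exp]
    rw [← ENNReal.ofReal_mul (Real.exp_pos y).le]
    congr 1
    have he := (Real.exp_pos y).ne'
    field_simp
  rw [lintegral_congr h2]
  -- step 4: decompose B
  have hBeq : B = ⋃ k : ℤ, Set.Icc ((k:ℝ) * L) ((k:ℝ) * L + t * L) := by
    ext y
    simp only [hB, Set.mem_iUnion, Set.mem_Icc, Set.mem_setOf_eq]
    constructor
    · intro h
      refine ⟨⌊y / L⌋, ?_, ?_⟩
      · have h1 := Int.floor_le (y / L)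
        calc (⌊y / L⌋ : ℝ) * L ≤ (y / L) * L := by
              apply mul_le_mul_of_nonneg_right h1 hL.le
          _ = y := by field_simp
      · have h1 : y / L - ⌊y / L⌋ ≤ t := by
          rw [Int.self_sub_floor]
          exact h
        have h2 : y / L ≤ ⌊y / L⌋ + t := by linarith
        calc y = (y / L) * L := by field_simp
          _ ≤ ((⌊y / L⌋ : ℝ) + t) * L := mul_le_mul_of_nonneg_right h2 hL.le
          _ = (⌊y / L⌋ : ℝ) * L + t * L := by ring
    · rintro ⟨k, h1, h2⟩
      have hk : ⌊y / L⌋ = k := by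
        rw [Int.floor_eq_iff]
        constructor
        · rw [le_div_iff₀ hL]
          linarith
        · rw [div_lt_iff₀ hL]
          push_cast
          nlinarith
      have hfr : Int.fract (y / L) = y / L - k := by rw [← Int.self_sub_floor, hk]
      rw [hfr]
      have : y / L ≤ k + t := by
        rw [div_le_iff₀ hL]
        nlinarith
      linarith
  rw [hBeq]
  -- step 5: iUnion
  have hdisjkey : ∀ j k : ℤ, j < k →
      Disjoint (Set.Icc ((j:ℝ) * L) ((j:ℝ) * L + t * L))
        (Set.Icc ((k:ℝ) * L) ((k:ℝ) * L + t * L)) := by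
    intro j k hjk
    apply Set.disjoint_left.mpr
    rintro y ⟨-, hy2⟩ ⟨hy3, -⟩
    have hjk1 : (j:ℝ) + 1 ≤ k := by exact_mod_cast hjk
    nlinarith
  have hdisj : Pairwise (Function.onFun Disjoint
      (fun k : ℤ => Set.Icc ((k:ℝ) * L) ((k:ℝ) * L + t * L))) := by
    intro j k hjk
    rcases hjk.lt_or_gt with h | h
    · exact hdisjkey j k h
    · exact (hdisjkey k j h).symm
  rw [lintegral_iUnion (fun k => measurableSet_Icc) hdisj]
  -- step 6: translate
  have htrans : ∀ k : ℤ, ∫⁻ y in Set.Icc ((k:ℝ) * L) ((k:ℝ) * L + t * L),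
      ENNReal.ofReal (a / Real.pi * sinc (a * y) ^ 2)
      = ∫⁻ u in Set.Icc (0:ℝ) (t * L),
          ENNReal.ofReal (a / Real.pi * sinc (a * (u + (k:ℝ) * L)) ^ 2) := by
    intro k
    have h := (measurePreserving_add_right volume ((k:ℝ) * L)).setLIntegral_comp_preimage_emb
      (measurableEmbedding_addRight _)
      (fun y => ENNReal.ofReal (a / Real.pi * sinc (a * y) ^ 2))
      (Set.Icc ((k:ℝ) * L) ((k:ℝ) * L + t * L))
    rw [← h]
    congr 1
    rw [Set.preimage_add_const_Icc]
    congr 1 <;> ring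
  simp_rw [htrans]
  -- step 7: swap sum and integral
  have hmeas : ∀ k : ℤ, Measurable (fun u : ℝ =>
      ENNReal.ofReal (a / Real.pi * sinc (a * (u + (k:ℝ) * L)) ^ 2)) := by
    intro k
    apply ENNReal.measurable_ofReal.comp
    exact (measurable_const.mul
      ((BenfordAux.measurable_sinc.comp ((measurable_id.add_const _).const_mul a)).pow_const 2))
  rw [← lintegral_tsum (fun k => (hmeas k).aemeasurable)]
  -- step 8: a.e. identity
  have hbad : volume {u : ℝ | ¬ ∀ k : ℤ, u + (k:ℝ) * L ≠ 0} = 0 := by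
    have hsub : {u : ℝ | ¬ ∀ k : ℤ, u + (k:ℝ) * L ≠ 0}
        ⊆ Set.range (fun k : ℤ => -((k:ℝ) * L)) := by
      intro u hu
      simp only [Set.mem_setOf_eq, not_forall, not_not] at hu
      obtain ⟨k, hk⟩ := hu
      refine ⟨k, ?_⟩
      show -((k:ℝ) * L) = u
      linarith
    exact measure_mono_null hsub ((Set.countable_range _).measure_zero _)
  have hae : ∀ᵐ u ∂(volume.restrict (Set.Icc (0:ℝ) (t * L))),
      (∑' k : ℤ, ENNReal.ofReal (a / Real.pi * sinc (a * (u + (k:ℝ) * L)) ^ 2))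
        = ENNReal.ofReal (1 / L) := by
    apply ae_restrict_of_ae
    rw [MeasureTheory.ae_iff]
    apply measure_mono_null _ hbad
    intro u hu
    simp only [Set.mem_setOf_eq] at hu ⊢
    intro hall
    apply hu
    have hkey : HasSum (fun k : ℤ => sinc (a * u + (k:ℝ) * (a * L)) ^ 2) (Real.pi / (a * L)) :=
      BenfordAux.key (by positivity) haL
        (fun k => by
          have := mul_ne_zero ha.ne' (hall k)
          intro hcontra
          apply this
          rw [← hcontra]
          ring)
    have hkey2 : HasSum (fun k : ℤ => a / Real.pi * sinc (a * (u + (k:ℝ) * L)) ^ 2)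
        (a / Real.pi * (Real.pi / (a * L))) := by
      have := hkey.mul_left (a / Real.pi)
      refine this.congr_fun fun k => ?_
      congr 2
      ring
    have hnn : ∀ k : ℤ, 0 ≤ a / Real.pi * sinc (a * (u + (k:ℝ) * L)) ^ 2 := by
      intro k
      positivity
    rw [← ENNReal.ofReal_tsum_of_nonneg hnn hkey2.summable, hkey2.tsum_eq]
    congr 1
    field_simp
  rw [lintegral_congr_ae hae, setLIntegral_const]
  rw [Real.volume_Icc]
  rw [← ENNReal.ofReal_mul (by positivity)]
  congr 1
  field_simp
  ring

end BenfordAux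

/-- For `a > 0` and an integer base `b ≥ 2` with `ln b < π/a`, a random variable with
density `P_X(x) = (a/(π x)) sinc²(a ln x)` on `(0,∞)` satisfies the strong Benford law. -/
theorem sinc_sq_density_is_benford
    (a : ℝ) (ha : 0 < a) (b : ℕ) (hb : 2 ≤ b) (hba : Real.log b < Real.pi / a)
    {Ω : Type*} [MeasurableSpace Ω] (μ : Measure Ω) [IsProbabilityMeasure μ]
    (X : Ω → ℝ) (hXm : Measurable X) (hXpos : ∀ ω, 0 < X ω)
    (hd : μ.map X = volume.withDensity (fun x => ENNReal.ofReal
        (Set.indicator (Set.Ioi 0)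
          (fun x => a / (Real.pi * x) * sinc (a * Real.log x) ^ 2) x))) :
    ∀ s ∈ Set.Ico (1 : ℝ) b,
      μ {ω | 1 ≤ (b : ℝ) ^ Int.fract (Real.logb b (X ω)) ∧
             (b : ℝ) ^ Int.fract (Real.logb b (X ω)) ≤ s}
        = ENNReal.ofReal (Real.logb b s) := by
  intro s hs
  obtain ⟨hs1, hsb⟩ := hs
  have hb2 : (2:ℝ) ≤ (b:ℝ) := by exact_mod_cast hb
  have hb1 : (1:ℝ) < b := by linarith
  have hbpos : (0:ℝ) < b := by linarith
  have hs0 : (0:ℝ) < s := by linarith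
  set L : ℝ := Real.log b with hLdef
  have hL : 0 < L := Real.log_pos hb1
  set t : ℝ := Real.logb b s with htdef
  have ht0 : 0 ≤ t := Real.logb_nonneg hb1 hs1
  have ht1 : t < 1 := by
    rw [htdef, Real.logb, div_lt_one hL]
    exact Real.log_lt_log hs0 hsb
  have haL : a * L < Real.pi := by
    rw [lt_div_iff₀ ha] at hba
    rw [hLdef]
    nlinarith
  have hseq : s = (b:ℝ) ^ t := (Real.rpow_logb hbpos (ne_of_gt hb1) hs0).symm
  have hlogbeq : ∀ x : ℝ, Real.logb b x = Real.log x / L := fun x => rfl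
  have hsetev : {ω | 1 ≤ (b : ℝ) ^ Int.fract (Real.logb b (X ω)) ∧
             (b : ℝ) ^ Int.fract (Real.logb b (X ω)) ≤ s}
      = X ⁻¹' {x | Int.fract (Real.log x / L) ≤ t} := by
    ext ω
    simp only [Set.mem_setOf_eq, Set.mem_preimage]
    rw [← hlogbeq]
    constructor
    · rintro ⟨-, h2⟩
      rw [hseq] at h2
      exact (Real.rpow_le_rpow_left_iff hb1).mp h2
    · intro h
      constructor
      · rw [show (1:ℝ) = (b:ℝ) ^ (0:ℝ) from (Real.rpow_zero _).symm]
        exact (Real.rpow_le_rpow_left_iff hb1).mpr (Int.fract_nonneg _)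
      · rw [hseq]
        exact (Real.rpow_le_rpow_left_iff hb1).mpr h
  have hAm : MeasurableSet {x : ℝ | Int.fract (Real.log x / L) ≤ t} :=
    measurableSet_le (measurable_fract.comp (Real.measurable_log.div_const L))
      measurable_const
  rw [hsetev, ← Measure.map_apply hXm hAm, hd, withDensity_apply _ hAm,
    BenfordAux.benford_integral a L t ha hL haL ht0 ht1]
end
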